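/- arXiv:2602.17549 — 3 statements merged into one kernel-verified Lean document; each statement's English description precedes it below -/
import Mathlib

section
/- Let φ: 𝔻 → 𝔻 be an injective holomorphic map on the open unit disk. Define H_φ(z,w) = log|φ(z)−φ(w)| − log|z−w| − (1/2)log|φ'(z)| − (1/2)log|φ'(w)| for z ≠ w. Then H_φ extends to a harmonic function on 𝔻 × 𝔻; concretely, H_φ(z,w) = −(1/2)log|F_φ(z,w)| where F_φ(z,w) = φ'(z)φ'(w)(z−w)²/(φ(z)−φ(w))² extends to a nonvanishing holomorphic function on 𝔻 × 𝔻. -/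
open Metric Set Filter MeasureTheory
open scoped Topology Real

lemma deriv_ne_zero_of_injOn (φ : ℂ → ℂ)
    (hφd : DifferentiableOn ℂ φ (ball 0 1)) (hφi : Set.InjOn φ (ball 0 1)) :
    ∀ z₀ ∈ ball (0 : ℂ) 1, deriv φ z₀ ≠ 0 := by
  intro z₀ hz₀ h0
  have hA : AnalyticOnNhd ℂ φ (ball 0 1) := hφd.analyticOnNhd isOpen_ball
  have hAz : AnalyticAt ℂ φ z₀ := hA z₀ hz₀
  have hg : AnalyticAt ℂ (fun z => φ z - φ z₀) z₀ := hAz.sub analyticAt_const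
  have hD : ∀ᶠ z in 𝓝 z₀, z ∈ ball (0:ℂ) 1 := isOpen_ball.mem_nhds hz₀
  have hne : ¬ (∀ᶠ z in 𝓝 z₀, φ z - φ z₀ = 0) := by
    intro h
    have h2 : ∀ᶠ z in 𝓝[≠] z₀, φ z - φ z₀ = 0 ∧ z ∈ ball (0:ℂ) 1 :=
      nhdsWithin_le_nhds (h.and hD)
    obtain ⟨z, ⟨hgz, hzD⟩, hzz⟩ := (h2.and self_mem_nhdsWithin).exists
    exact Set.mem_compl_singleton_iff.mp hzz (hφi hzD hz₀ (by linear_combination hgz))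
  have hord : analyticOrderAt (fun z => φ z - φ z₀) z₀ ≠ ⊤ :=
    fun htop => hne (analyticOrderAt_eq_top.mp htop)
  obtain ⟨n, hn⟩ := WithTop.ne_top_iff_exists.mp hord
  obtain ⟨h, hh, hh0, hhe⟩ := hg.analyticOrderAt_eq_natCast.mp hn.symm
  have hn0 : n ≠ 0 := by
    rintro rfl
    have h1 := hhe.self_of_nhds
    simp only [sub_self, pow_zero, one_smul] at h1
    exact hh0 h1.symm
  have hn1 : n ≠ 1 := by
    rintro rfl
    have hder : HasDerivAt (fun z => (z - z₀) ^ 1 • h z)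
        (1 * h z₀ + (z₀ - z₀) * deriv h z₀) z₀ := by
      simpa [pow_one, smul_eq_mul, Pi.mul_def] using
        (((hasDerivAt_id z₀).sub_const z₀).mul hh.differentiableAt.hasDerivAt)
    have hEE : (fun z => φ z - φ z₀) =ᶠ[𝓝 z₀] (fun z => (z - z₀) ^ 1 • h z) := hhe
    have h2 : deriv (fun z => φ z - φ z₀) z₀ = 1 * h z₀ + (z₀ - z₀) * deriv h z₀ :=
      hEE.deriv_eq.trans hder.deriv
    have h3 : deriv (fun z => φ z - φ z₀) z₀ = deriv φ z₀ := by
      simp [deriv_sub_const]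
    rw [h3, h0] at h2
    simp at h2
    exact hh0 h2.symm
  have hn2 : 2 ≤ n := by omega
  have hnC : (n : ℂ) ≠ 0 := Nat.cast_ne_zero.mpr hn0
  set c := h z₀ with hc
  set r : ℂ → ℂ := fun z =>
    Complex.exp ((Complex.log c + Complex.log (h z / c)) * (n : ℂ)⁻¹) with hrdef
  have hr_an : AnalyticAt ℂ r z₀ := by
    apply AnalyticAt.cexp
    apply AnalyticAt.mul _ analyticAt_const
    apply analyticAt_const.add
    apply AnalyticAt.clog (hh.div analyticAt_const hh0)
    show c / c ∈ Complex.slitPlane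
    simp [div_self hh0]
  have hr0 : r z₀ ≠ 0 := Complex.exp_ne_zero _
  have hrn : ∀ᶠ z in 𝓝 z₀, r z ^ n = h z := by
    filter_upwards [hh.continuousAt.eventually_ne hh0] with z hz
    rw [hrdef]
    simp only
    rw [← Complex.exp_nat_mul]
    have hmul : (n : ℂ) * ((Complex.log c + Complex.log (h z / c)) * (n : ℂ)⁻¹)
        = Complex.log c + Complex.log (h z / c) := by
      field_simp
    rw [hmul, Complex.exp_add, Complex.exp_log hh0,
      Complex.exp_log (div_ne_zero hz hh0)]
    field_simp
  set ψ : ℂ → ℂ := fun z => (z - z₀) * r z with hψdef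
  have hψ0 : ψ z₀ = 0 := by simp [hψdef]
  have hψa : AnalyticAt ℂ ψ z₀ := (analyticAt_id.sub analyticAt_const).mul hr_an
  have hEq : ∀ᶠ z in 𝓝 z₀, φ z = φ z₀ + ψ z ^ n := by
    filter_upwards [hhe, hrn] with z h1 h2
    have h1' : φ z - φ z₀ = (z - z₀) ^ n * h z := by simpa [smul_eq_mul] using h1
    rw [← h2] at h1'
    have hmp : ψ z ^ n = (z - z₀) ^ n * r z ^ n := mul_pow _ _ _
    rw [hmp]
    linear_combination h1'
  have hnc : ¬ (∀ᶠ z in 𝓝 z₀, ψ z = ψ z₀) := by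
    intro hcon
    have h2 : ∀ᶠ z in 𝓝[≠] z₀, ψ z = ψ z₀ ∧ r z ≠ 0 :=
      nhdsWithin_le_nhds (hcon.and (hr_an.continuousAt.eventually_ne hr0))
    obtain ⟨z, ⟨hz1, hz2⟩, hz3⟩ := (h2.and self_mem_nhdsWithin).exists
    rw [hψ0, hψdef] at hz1
    rcases mul_eq_zero.mp hz1 with hzc | hzc
    · exact Set.mem_compl_singleton_iff.mp hz3 (sub_eq_zero.mp hzc)
    · exact hz2 hzc
  have hmap : 𝓝 (ψ z₀) ≤ Filter.map ψ (𝓝 z₀) :=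
    hψa.eventually_constant_or_nhds_le_map_nhds.resolve_left hnc
  set W : Set ℂ := {z | φ z = φ z₀ + ψ z ^ n ∧ z ∈ ball (0:ℂ) 1} with hWdef
  have hW : W ∈ 𝓝 z₀ := hEq.and hD
  have hWim : ψ '' W ∈ 𝓝 (0 : ℂ) := by
    rw [← hψ0]
    exact hmap (image_mem_map hW)
  obtain ⟨δ, hδ, hball⟩ := Metric.mem_nhds_iff.mp hWim
  set w : ℂ := ((δ / 2 : ℝ) : ℂ) with hwdef
  have hw0 : w ≠ 0 := by
    rw [hwdef]
    simp only [ne_eq, Complex.ofReal_eq_zero]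
    positivity
  have hwnorm : ‖w‖ = δ / 2 := by
    rw [hwdef, Complex.norm_real, Real.norm_of_nonneg (by positivity)]
  set ζ : ℂ := Complex.exp (((2 * π / n : ℝ) : ℂ) * Complex.I) with hζdef
  have hζabs : ‖ζ‖ = 1 := Complex.norm_exp_ofReal_mul_I _
  have hζn : ζ ^ n = 1 := by
    rw [hζdef, ← Complex.exp_nat_mul]
    have hmm : (n : ℂ) * (((2 * π / n : ℝ) : ℂ) * Complex.I) = 2 * π * Complex.I := by
      push_cast
      field_simp
    rw [hmm, Complex.exp_two_pi_mul_I]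
  have hζ1 : ζ ≠ 1 := by
    intro hcon
    obtain ⟨k, hk⟩ := Complex.exp_eq_one_iff.mp (hζdef ▸ hcon)
    have hk1 : ((2 * π / n : ℝ) : ℂ) = (k : ℂ) * (2 * π) := by
      apply mul_right_cancel₀ Complex.I_ne_zero
      rw [hk]; ring
    have hk2 : (2 * π / n : ℝ) = (k : ℝ) * (2 * π) := by exact_mod_cast hk1
    have hπ : (0:ℝ) < π := Real.pi_pos
    have hnR : (2:ℝ) ≤ (n:ℝ) := by exact_mod_cast hn2
    have hkval : (k : ℝ) = 1 / (n:ℝ) := by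
      have h2π : (2*π) ≠ 0 := by positivity
      field_simp at hk2 ⊢
      nlinarith [hk2]
    have hkpos : (0:ℝ) < (k:ℝ) := by rw [hkval]; positivity
    have hklt : (k:ℝ) < 1 := by
      rw [hkval, div_lt_one (by linarith)]
      linarith
    have hk1' : (1:ℝ) ≤ (k:ℝ) := by
      exact_mod_cast Int.cast_pos.mp hkpos
    linarith
  have hwball : w ∈ ball (0:ℂ) δ := by
    rw [mem_ball_zero_iff]
    rw [hwnorm]
    linarith
  have hζwball : ζ * w ∈ ball (0:ℂ) δ := by
    rw [mem_ball_zero_iff, norm_mul, hζabs, one_mul, hwnorm]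
    linarith
  obtain ⟨z₁, hz₁W, hψ1⟩ := hball hwball
  obtain ⟨z₂, hz₂W, hψ2⟩ := hball hζwball
  have hzne : z₁ ≠ z₂ := by
    intro hcon
    rw [hcon, hψ2] at hψ1
    exact hζ1 (mul_right_cancel₀ hw0 (by rw [one_mul]; exact hψ1))
  have hφ12 : φ z₁ = φ z₂ := by
    rw [hz₁W.1, hz₂W.1, hψ1, hψ2, mul_pow, hζn, one_mul]
  exact hzne (hφi hz₁W.2 hz₂W.2 hφ12)
noncomputable def Kfun (φ : ℂ → ℂ) : ℂ × ℂ → ℂ :=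
  fun x => ∫ t in Set.Ioc (0:ℝ) 1, deriv φ (x.2 + (t:ℂ) * (x.1 - x.2))

lemma Kfun_diag (φ : ℂ → ℂ) (z : ℂ) : Kfun φ (z, z) = deriv φ z := by
  unfold Kfun
  simp [Real.volume_Ioc]

lemma seg_mem_ball {z w : ℂ} (hz : z ∈ ball (0:ℂ) 1) (hw : w ∈ ball (0:ℂ) 1)
    {t : ℝ} (ht : t ∈ Icc (0:ℝ) 1) : w + (t:ℂ) * (z - w) ∈ ball (0:ℂ) 1 := by
  rw [mem_ball_zero_iff] at *
  have he : w + (t:ℂ) * (z - w) = ((1 - t : ℝ) : ℂ) * w + ((t:ℝ) : ℂ) * z := by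
    push_cast; ring
  rw [he]
  calc ‖((1 - t : ℝ) : ℂ) * w + ((t:ℝ) : ℂ) * z‖
      ≤ ‖((1 - t : ℝ) : ℂ)‖ * ‖w‖ + ‖((t:ℝ) : ℂ)‖ * ‖z‖ := by
        refine (norm_add_le _ _).trans ?_
        rw [norm_mul, norm_mul]
    _ = (1 - t) * ‖w‖ + t * ‖z‖ := by
        rw [Complex.norm_real, Complex.norm_real, Real.norm_of_nonneg (by linarith [ht.2]),
          Real.norm_of_nonneg ht.1]
    _ < 1 := by
        rcases lt_or_ge t 1 with h | h
        · nlinarith [mul_lt_mul_of_pos_left hw (by linarith : (0:ℝ) < 1 - t),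
            mul_le_mul_of_nonneg_left hz.le ht.1]
        · have ht1 : t = 1 := le_antisymm ht.2 h
          subst ht1
          simpa using hz

lemma Kfun_mul (φ : ℂ → ℂ) (hφd : DifferentiableOn ℂ φ (ball 0 1))
    {z w : ℂ} (hz : z ∈ ball (0:ℂ) 1) (hw : w ∈ ball (0:ℂ) 1) :
    (z - w) * Kfun φ (z, w) = φ z - φ w := by
  have hA : AnalyticOnNhd ℂ φ (ball 0 1) := hφd.analyticOnNhd isOpen_ball
  have hdc : ContinuousOn (deriv φ) (ball (0:ℂ) 1) := (hA.deriv).continuousOn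
  have hinner : ∀ t : ℝ, HasDerivAt (fun s : ℝ => w + (s:ℂ) * (z - w)) (z - w) t := by
    intro t
    have h1 : HasDerivAt (fun s : ℝ => (s:ℂ)) 1 t := by
      exact Complex.ofRealCLM.hasDerivAt
    simpa using (h1.mul_const (z - w)).const_add w
  have hderiv : ∀ t ∈ uIcc (0:ℝ) 1, HasDerivAt (fun s : ℝ => φ (w + (s:ℂ) * (z - w)))
      ((z - w) * deriv φ (w + (t:ℂ) * (z - w))) t := by
    intro t ht
    rw [uIcc_of_le zero_le_one] at ht
    have hy : w + (t:ℂ) * (z - w) ∈ ball (0:ℂ) 1 := seg_mem_ball hz hw ht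
    have houter : HasDerivAt φ (deriv φ (w + (t:ℂ) * (z - w))) (w + (t:ℂ) * (z - w)) :=
      (hφd.differentiableAt (isOpen_ball.mem_nhds hy)).hasDerivAt
    have := houter.scomp t (hinner t)
    simpa [smul_eq_mul, Function.comp_def] using this
  have hcont : ContinuousOn (fun t : ℝ => (z - w) * deriv φ (w + (t:ℂ) * (z - w)))
      (uIcc (0:ℝ) 1) := by
    rw [uIcc_of_le zero_le_one]
    apply ContinuousOn.mul continuousOn_const
    apply hdc.comp
    · exact (continuous_const.add ((Complex.continuous_ofReal.mul continuous_const))).continuousOn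
    · intro t ht
      exact seg_mem_ball hz hw ht
  have hint : IntervalIntegrable (fun t : ℝ => (z - w) * deriv φ (w + (t:ℂ) * (z - w)))
      volume 0 1 := hcont.intervalIntegrable
  have hftc := intervalIntegral.integral_eq_sub_of_hasDerivAt hderiv hint
  simp only [Complex.ofReal_one, Complex.ofReal_zero, one_mul, zero_mul, add_zero] at hftc
  rw [intervalIntegral.integral_const_mul] at hftc
  rw [intervalIntegral.integral_of_le zero_le_one] at hftc
  have hzz : w + (z - w) = z := by ring
  rw [hzz] at hftc
  exact hftc

set_option maxHeartbeats 1000000 in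
set_option synthInstance.maxHeartbeats 200000 in
lemma Kfun_differentiableAt (φ : ℂ → ℂ) (hφd : DifferentiableOn ℂ φ (ball 0 1))
    {x₀ : ℂ × ℂ} (hx₀ : x₀ ∈ ball (0:ℂ) 1 ×ˢ ball (0:ℂ) 1) :
    DifferentiableAt ℂ (Kfun φ) x₀ := by
  obtain ⟨hz₀, hw₀⟩ := hx₀
  have hA : AnalyticOnNhd ℂ φ (ball 0 1) := hφd.analyticOnNhd isOpen_ball
  have hdc : ContinuousOn (deriv φ) (ball (0:ℂ) 1) := (hA.deriv).continuousOn
  have hddc : ContinuousOn (deriv (deriv φ)) (ball (0:ℂ) 1) := ((hA.deriv).deriv).continuousOn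
  rw [mem_ball_zero_iff] at hz₀ hw₀
  set m : ℝ := max ‖x₀.1‖ ‖x₀.2‖ with hmdef
  have hm : m < 1 := max_lt hz₀ hw₀
  have hm0 : 0 ≤ m := le_trans (norm_nonneg _) (le_max_left _ _)
  set ρ : ℝ := (m + 1) / 2 with hρdef
  set ε : ℝ := (1 - m) / 2 with hεdef
  have hε : 0 < ε := by rw [hεdef]; linarith
  have hρ1 : ρ < 1 := by rw [hρdef]; linarith
  have hρ0 : 0 < ρ := by rw [hρdef]; linarith
  -- points in the ε-ball have coordinates of norm < ρ
  have hcoord : ∀ x : ℂ × ℂ, x ∈ ball x₀ ε → ‖x.1‖ < ρ ∧ ‖x.2‖ < ρ := by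
    intro x hx
    rw [mem_ball, Prod.dist_eq, max_lt_iff] at hx
    obtain ⟨h1, h2⟩ := hx
    rw [dist_eq_norm] at h1 h2
    constructor
    · calc ‖x.1‖ = ‖x₀.1 + (x.1 - x₀.1)‖ := by ring_nf
        _ ≤ ‖x₀.1‖ + ‖x.1 - x₀.1‖ := norm_add_le _ _
        _ < m + ε := by
            have : ‖x₀.1‖ ≤ m := le_max_left _ _
            linarith
        _ = ρ := by rw [hεdef, hρdef]; ring
    · calc ‖x.2‖ = ‖x₀.2 + (x.2 - x₀.2)‖ := by ring_nf
        _ ≤ ‖x₀.2‖ + ‖x.2 - x₀.2‖ := norm_add_le _ _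
        _ < m + ε := by
            have : ‖x₀.2‖ ≤ m := le_max_right _ _
            linarith
        _ = ρ := by rw [hεdef, hρdef]; ring
  -- the segment stays in the closed ball of radius ρ
  have hseg : ∀ x : ℂ × ℂ, ‖x.1‖ < ρ → ‖x.2‖ < ρ → ∀ t ∈ Icc (0:ℝ) 1,
      x.2 + (t:ℂ) * (x.1 - x.2) ∈ closedBall (0:ℂ) ρ := by
    intro x h1 h2 t ht
    rw [mem_closedBall_zero_iff]
    have he : x.2 + (t:ℂ) * (x.1 - x.2) = ((1 - t : ℝ) : ℂ) * x.2 + ((t:ℝ) : ℂ) * x.1 := by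
      push_cast; ring
    rw [he]
    calc ‖((1 - t : ℝ) : ℂ) * x.2 + ((t:ℝ) : ℂ) * x.1‖
        ≤ ‖((1 - t : ℝ) : ℂ)‖ * ‖x.2‖ + ‖((t:ℝ) : ℂ)‖ * ‖x.1‖ := by
          refine (norm_add_le _ _).trans ?_
          rw [norm_mul, norm_mul]
      _ = (1 - t) * ‖x.2‖ + t * ‖x.1‖ := by
          rw [Complex.norm_real, Complex.norm_real, Real.norm_of_nonneg (by linarith [ht.2]),
            Real.norm_of_nonneg ht.1]
      _ ≤ ρ := by nlinarith [ht.1, ht.2, norm_nonneg x.1, norm_nonneg x.2]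
  have hSD : closedBall (0:ℂ) ρ ⊆ ball (0:ℂ) 1 := closedBall_subset_ball hρ1
  -- bound for the second derivative on the closed ball
  obtain ⟨M, hM⟩ := (isCompact_closedBall (0:ℂ) ρ).exists_bound_of_continuousOn
    (hddc.mono hSD)
  have hM0 : 0 ≤ M :=
    le_trans (norm_nonneg _) (hM 0 (mem_closedBall_self hρ0.le))
  -- the linear map family
  set L : ℝ → (ℂ × ℂ) →L[ℂ] ℂ := fun t =>
    ContinuousLinearMap.snd ℂ ℂ ℂ +
      (t:ℂ) • (ContinuousLinearMap.fst ℂ ℂ ℂ - ContinuousLinearMap.snd ℂ ℂ ℂ) with hLdef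
  have hLapp : ∀ (t : ℝ) (x : ℂ × ℂ), L t x = x.2 + (t:ℂ) * (x.1 - x.2) := by
    intro t x
    simp [hLdef, smul_eq_mul]
  have hLnorm : ∀ t ∈ Icc (0:ℝ) 1, ‖L t‖ ≤ 3 := by
    intro t ht
    apply ContinuousLinearMap.opNorm_le_bound _ (by norm_num)
    intro x
    rw [hLapp]
    calc ‖x.2 + (t:ℂ) * (x.1 - x.2)‖ ≤ ‖x.2‖ + ‖(t:ℂ)‖ * (‖x.1‖ + ‖x.2‖) := by
          refine (norm_add_le _ _).trans ?_
          gcongr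
          rw [norm_mul]
          gcongr
          exact norm_sub_le _ _
      _ ≤ ‖x.2‖ + 1 * (‖x.1‖ + ‖x.2‖) := by
          gcongr
          rw [Complex.norm_real, Real.norm_of_nonneg ht.1]
          exact ht.2
      _ ≤ 3 * ‖x‖ := by
          have h1 := norm_fst_le x
          have h2 := norm_snd_le x
          linarith
  have hLc : ∀ x : ℂ × ℂ, Continuous (fun t : ℝ => L t x) := by
    intro x
    simp only [hLapp]
    exact continuous_const.add (Complex.continuous_ofReal.mul continuous_const)
  have hLcont : Continuous L := by
    apply continuous_const.add
    exact (Complex.continuous_ofReal.smul continuous_const)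
  -- the derivative candidate
  set F' : (ℂ × ℂ) → ℝ → ((ℂ × ℂ) →L[ℂ] ℂ) := fun x t =>
    deriv (deriv φ) (L t x) • L t with hF'def
  set μ : Measure ℝ := volume.restrict (Set.Ioc (0:ℝ) 1) with hμdef
  -- pointwise differentiability in x
  have hdiff : ∀ t ∈ Set.Ioc (0:ℝ) 1, ∀ x : ℂ × ℂ, x ∈ ball x₀ ε →
      HasFDerivAt (fun y : ℂ × ℂ => deriv φ (L t y)) (F' x t) x := by
    intro t ht x hx
    obtain ⟨h1, h2⟩ := hcoord x hx
    have htI : t ∈ Icc (0:ℝ) 1 := Ioc_subset_Icc_self ht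
    have hyD : L t x ∈ ball (0:ℂ) 1 := by
      rw [hLapp]
      exact hSD (hseg x h1 h2 t htI)
    have houter : HasDerivAt (deriv φ) (deriv (deriv φ) (L t x)) (L t x) :=
      (((hA.deriv) (L t x) hyD).differentiableAt).hasDerivAt
    have hcomp := houter.hasFDerivAt.comp x (L t).hasFDerivAt
    have heq : (ContinuousLinearMap.toSpanSingleton ℂ
        (deriv (deriv φ) (L t x))).comp (L t) = F' x t := by
      refine ContinuousLinearMap.ext fun p => ?_
      simp only [hF'def, ContinuousLinearMap.coe_comp', Function.comp_apply,
        ContinuousLinearMap.toSpanSingleton_apply,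
        ContinuousLinearMap.smul_apply, smul_eq_mul]
      ring
    rw [heq] at hcomp
    exact hcomp
  -- continuity in t of the integrand, for points with coordinates < ρ
  have hcont_t : ∀ x : ℂ × ℂ, ‖x.1‖ < ρ → ‖x.2‖ < ρ →
      ContinuousOn (fun t : ℝ => deriv φ (L t x)) (Set.Ioc (0:ℝ) 1) := by
    intro x h1 h2
    have hmapsto : Set.MapsTo (fun t : ℝ => L t x) (Set.Icc (0:ℝ) 1) (ball (0:ℂ) 1) := by
      intro t ht
      simp only [hLapp]
      exact hSD (hseg x h1 h2 t ht)
    exact (hdc.comp (hLc x).continuousOn hmapsto).mono Ioc_subset_Icc_self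
  have key := hasFDerivAt_integral_of_dominated_of_fderiv_le (𝕜 := ℂ)
    (μ := μ) (F := fun (x : ℂ × ℂ) (t : ℝ) => deriv φ (L t x)) (F' := F')
    (x₀ := x₀) (bound := fun _ => 3 * M) (ball_mem_nhds x₀ hε)
    ?_ ?_ ?_ ?_ ?_ ?_
  · -- conclude
    have hfun : (fun x : ℂ × ℂ => ∫ t, deriv φ (L t x) ∂μ) = Kfun φ := by
      funext x
      simp only [Kfun, hμdef, hLapp]
    rw [hfun] at key
    exact key.differentiableAt
  · -- hF_meas
    filter_upwards [ball_mem_nhds x₀ hε] with x hx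
    obtain ⟨h1, h2⟩ := hcoord x hx
    exact ((hcont_t x h1 h2).aestronglyMeasurable measurableSet_Ioc)
  · -- hF_int
    have h1 : ‖x₀.1‖ < ρ := (hcoord x₀ (mem_ball_self hε)).1
    have h2 : ‖x₀.2‖ < ρ := (hcoord x₀ (mem_ball_self hε)).2
    have hmapsto : Set.MapsTo (fun t : ℝ => L t x₀) (Set.Icc (0:ℝ) 1) (ball (0:ℂ) 1) := by
      intro t ht
      simp only [hLapp]
      exact hSD (hseg x₀ h1 h2 t ht)
    have hc : ContinuousOn (fun t : ℝ => deriv φ (L t x₀)) (Set.Icc (0:ℝ) 1) :=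
      hdc.comp (hLc x₀).continuousOn hmapsto
    exact (hc.integrableOn_Icc).mono_set Ioc_subset_Icc_self
  · -- hF'_meas
    have h1 : ‖x₀.1‖ < ρ := (hcoord x₀ (mem_ball_self hε)).1
    have h2 : ‖x₀.2‖ < ρ := (hcoord x₀ (mem_ball_self hε)).2
    have hmapsto : Set.MapsTo (fun t : ℝ => L t x₀) (Set.Icc (0:ℝ) 1) (ball (0:ℂ) 1) := by
      intro t ht
      simp only [hLapp]
      exact hSD (hseg x₀ h1 h2 t ht)
    have hdd : ContinuousOn (fun t : ℝ => deriv (deriv φ) (L t x₀)) (Set.Ioc (0:ℝ) 1) :=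
      (hddc.comp (hLc x₀).continuousOn hmapsto).mono Ioc_subset_Icc_self
    have hc : ContinuousOn (fun t : ℝ => F' x₀ t) (Set.Ioc (0:ℝ) 1) := by
      rw [hF'def]
      exact hdd.smul hLcont.continuousOn
    exact hc.aestronglyMeasurable measurableSet_Ioc
  · -- h_bound
    rw [hμdef]
    filter_upwards [ae_restrict_mem measurableSet_Ioc] with t ht x hx
    obtain ⟨h1, h2⟩ := hcoord x hx
    have htI : t ∈ Icc (0:ℝ) 1 := Ioc_subset_Icc_self ht
    have hyS : L t x ∈ closedBall (0:ℂ) ρ := by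
      rw [hLapp]
      exact hseg x h1 h2 t htI
    simp only [hF'def]
    refine le_trans (ContinuousLinearMap.opNorm_smul_le _ _) ?_
    calc ‖deriv (deriv φ) (L t x)‖ * ‖L t‖ ≤ M * 3 := by
          apply mul_le_mul (hM _ hyS) (hLnorm t htI) (norm_nonneg _) hM0
      _ = 3 * M := by ring
  · -- bound_integrable
    rw [hμdef]
    refine (integrableOn_const_iff).mpr (Or.inr ?_)
    rw [Real.volume_Ioc]
    norm_num
  · -- h_diff
    rw [hμdef]
    filter_upwards [ae_restrict_mem measurableSet_Ioc] with t ht x hx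
    exact hdiff t ht x hx

/-- For an injective holomorphic map φ : 𝔻 → 𝔻, the function
H_φ(z,w) = log|φ(z)−φ(w)| − log|z−w| − (1/2)log|φ'(z)| − (1/2)log|φ'(w)|
extends to a harmonic function on 𝔻 × 𝔻: concretely H_φ(z,w) = −(1/2)log|F_φ(z,w)|
where F_φ(z,w) = φ'(z)φ'(w)(z−w)²/(φ(z)−φ(w))² extends to a nonvanishing
holomorphic function on 𝔻 × 𝔻. -/
theorem Hcocycle_harmonic_extension (φ : ℂ → ℂ)
    (hφd : DifferentiableOn ℂ φ (ball 0 1)) (hφi : Set.InjOn φ (ball 0 1))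
    (hφm : Set.MapsTo φ (ball 0 1) (ball 0 1)) :
    ∃ F : ℂ × ℂ → ℂ,
      DifferentiableOn ℂ F (ball (0 : ℂ) 1 ×ˢ ball (0 : ℂ) 1) ∧
      (∀ z ∈ ball (0 : ℂ) 1, ∀ w ∈ ball (0 : ℂ) 1, F (z, w) ≠ 0) ∧
      (∀ z ∈ ball (0 : ℂ) 1, ∀ w ∈ ball (0 : ℂ) 1, z ≠ w →
        F (z, w) = deriv φ z * deriv φ w * (z - w) ^ 2 / (φ z - φ w) ^ 2) ∧
      (∀ z ∈ ball (0 : ℂ) 1, ∀ w ∈ ball (0 : ℂ) 1, z ≠ w →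
        Real.log (‖φ z - φ w‖) - Real.log (‖z - w‖)
          - (1 / 2) * Real.log (‖deriv φ z‖)
          - (1 / 2) * Real.log (‖deriv φ w‖)
          = -(1 / 2) * Real.log (‖F (z, w)‖)) := by
  have hder := deriv_ne_zero_of_injOn φ hφd hφi
  have hA : AnalyticOnNhd ℂ φ (ball 0 1) := hφd.analyticOnNhd isOpen_ball
  have hK0 : ∀ z ∈ ball (0:ℂ) 1, ∀ w ∈ ball (0:ℂ) 1, Kfun φ (z, w) ≠ 0 := by
    intro z hz w hw
    by_cases hzw : z = w
    · subst hzw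
      rw [Kfun_diag]
      exact hder z hz
    · intro hK
      have hm := Kfun_mul φ hφd hz hw
      rw [hK, mul_zero] at hm
      exact sub_ne_zero.mpr (fun h => hzw (hφi hz hw h)) hm.symm
  set F : ℂ × ℂ → ℂ := fun p => deriv φ p.1 * deriv φ p.2 * ((Kfun φ p) ^ 2)⁻¹ with hFdef
  have hFval : ∀ z ∈ ball (0:ℂ) 1, ∀ w ∈ ball (0:ℂ) 1, z ≠ w →
      F (z, w) = deriv φ z * deriv φ w * (z - w) ^ 2 / (φ z - φ w) ^ 2 := by
    intro z hz w hw hzw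
    have hc : z - w ≠ 0 := sub_ne_zero.mpr hzw
    have he : φ z - φ w ≠ 0 := sub_ne_zero.mpr (fun h => hzw (hφi hz hw h))
    have hK : Kfun φ (z, w) ≠ 0 := hK0 z hz w hw
    have hm := Kfun_mul φ hφd hz hw
    have h2 : (z - w) ^ 2 * Kfun φ (z, w) ^ 2 = (φ z - φ w) ^ 2 := by
      rw [← mul_pow, hm]
    rw [hFdef]
    simp only
    rw [← div_eq_mul_inv, div_eq_div_iff (pow_ne_zero 2 hK) (pow_ne_zero 2 he)]
    linear_combination (deriv φ z * deriv φ w) * h2.symm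
  refine ⟨F, ?_, ?_, ?_, ?_⟩
  · intro p hp
    rw [Set.mem_prod] at hp
    have d1 : DifferentiableAt ℂ (fun p : ℂ × ℂ => deriv φ p.1) p :=
      ((hA.deriv p.1 hp.1).differentiableAt).comp p differentiableAt_fst
    have d2 : DifferentiableAt ℂ (fun p : ℂ × ℂ => deriv φ p.2) p :=
      ((hA.deriv p.2 hp.2).differentiableAt).comp p differentiableAt_snd
    have dK : DifferentiableAt ℂ (Kfun φ) p :=
      Kfun_differentiableAt φ hφd (Set.mem_prod.mpr hp)
    have hK : Kfun φ p ≠ 0 := by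
      have := hK0 p.1 hp.1 p.2 hp.2
      simpa using this
    have dK2 : DifferentiableAt ℂ (fun x : ℂ × ℂ => Kfun φ x ^ 2) p :=
      DifferentiableAt.pow dK 2
    have hdF : DifferentiableAt ℂ
        (fun x : ℂ × ℂ => deriv φ x.1 * deriv φ x.2 * (Kfun φ x ^ 2)⁻¹) p :=
      (d1.mul d2).mul (dK2.inv (pow_ne_zero 2 hK))
    exact hdF.differentiableWithinAt
  · intro z hz w hw
    exact mul_ne_zero (mul_ne_zero (hder z hz) (hder w hw))
      (inv_ne_zero (pow_ne_zero 2 (hK0 z hz w hw)))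
  · exact hFval
  · intro z hz w hw hzw
    have ha : deriv φ z ≠ 0 := hder z hz
    have hb : deriv φ w ≠ 0 := hder w hw
    have hc : z - w ≠ 0 := sub_ne_zero.mpr hzw
    have he : φ z - φ w ≠ 0 := sub_ne_zero.mpr (fun h => hzw (hφi hz hw h))
    have ha' : ‖deriv φ z‖ ≠ 0 := norm_ne_zero_iff.mpr ha
    have hb' : ‖deriv φ w‖ ≠ 0 := norm_ne_zero_iff.mpr hb
    have hc' : ‖z - w‖ ≠ 0 := norm_ne_zero_iff.mpr hc
    have he' : ‖φ z - φ w‖ ≠ 0 := norm_ne_zero_iff.mpr he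
    rw [hFval z hz w hw hzw, norm_div, norm_mul, norm_mul, norm_pow, norm_pow,
      Real.log_div (mul_ne_zero (mul_ne_zero ha' hb') (pow_ne_zero _ hc'))
        (pow_ne_zero _ he'),
      Real.log_mul (mul_ne_zero ha' hb') (pow_ne_zero _ hc'),
      Real.log_mul ha' hb', Real.log_pow, Real.log_pow]
    push_cast
    ring
end

section
/- Let φ: 𝔻 → 𝔻 be an injective holomorphic map such that log|φ(z)−φ(w)| − log|z−w| − (1/2)log|φ'(z)| − (1/2)log|φ'(w)| = 0 for all z ≠ w in 𝔻. Then the Schwarzian derivative S(φ) = φ'''/φ' − (3/2)(φ''/φ')² vanishes identically on 𝔻. -/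
open Metric Set

private lemma deriv_zero_of_eqOn_zero {B : Set ℂ} (hB : IsOpen B) {F F' : ℂ → ℂ}
    (h0 : ∀ z ∈ B, F z = 0) (hd : ∀ z ∈ B, HasDerivAt F (F' z) z) :
    ∀ z ∈ B, F' z = 0 := by
  intro z hz
  have hev : F =ᶠ[nhds z] fun _ => 0 := by
    filter_upwards [hB.mem_nhds hz] with x hx using h0 x hx
  exact (hd z hz).unique ((hasDerivAt_const z (0:ℂ)).congr_of_eventuallyEq hev)

/-- If the cocycle H_φ vanishes identically off the diagonal for an
injective holomorphic φ : 𝔻 → 𝔻, then the Schwarzian derivative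
S(φ) = φ'''/φ' − (3/2)(φ''/φ')² vanishes on 𝔻. -/
theorem schwarzian_vanishes_of_Hcocycle_zero (φ : ℂ → ℂ)
    (hφd : DifferentiableOn ℂ φ (ball 0 1)) (hφi : Set.InjOn φ (ball 0 1))
    (hφm : Set.MapsTo φ (ball 0 1) (ball 0 1))
    (hH : ∀ z ∈ ball (0 : ℂ) 1, ∀ w ∈ ball (0 : ℂ) 1, z ≠ w →
      Real.log (‖φ z - φ w‖) - Real.log (‖z - w‖)
        - (1 / 2) * Real.log (‖deriv φ z‖)
        - (1 / 2) * Real.log (‖deriv φ w‖) = 0) :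
    ∀ z ∈ ball (0 : ℂ) 1,
      deriv (deriv (deriv φ)) z / deriv φ z
        - (3 / 2) * (deriv (deriv φ) z / deriv φ z) ^ 2 = 0 := by
  intro z₀ hz₀
  by_cases h1 : deriv φ z₀ = 0
  · simp [h1]
  -- analyticity
  have hA : AnalyticOnNhd ℂ φ (ball 0 1) := hφd.analyticOnNhd isOpen_ball
  have hA1 : AnalyticOnNhd ℂ (deriv φ) (ball 0 1) := hA.deriv
  have hA2 : AnalyticOnNhd ℂ (deriv (deriv φ)) (ball 0 1) := hA1.deriv
  have hA3 : AnalyticOnNhd ℂ (deriv (deriv (deriv φ))) (ball 0 1) := hA2.deriv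
  have hA4 : AnalyticOnNhd ℂ (deriv (deriv (deriv (deriv φ)))) (ball 0 1) := hA3.deriv
  -- a small ball where deriv φ ≠ 0
  obtain ⟨r, hr, hrsub⟩ : ∃ r > 0, ball z₀ r ⊆ ball 0 1 ∧
      ∀ z ∈ ball z₀ r, deriv φ z ≠ 0 := by
    have h2 : ∀ᶠ z in nhds z₀, deriv φ z ≠ 0 :=
      ((hA1 z₀ hz₀).continuousAt).eventually_ne h1
    have h3 : ∀ᶠ z in nhds z₀, z ∈ ball (0:ℂ) 1 ∧ deriv φ z ≠ 0 := by
      filter_upwards [isOpen_ball.mem_nhds hz₀, h2] with x hx hx' using ⟨hx, hx'⟩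
    rcases Metric.eventually_nhds_iff_ball.mp h3 with ⟨r, hr, hball⟩
    exact ⟨r, hr, fun z hz => (hball z hz).1, fun z hz => (hball z hz).2⟩
  obtain ⟨hBD, hne⟩ := hrsub
  set B := ball z₀ r with hBdef
  have hz₀B : z₀ ∈ B := mem_ball_self hr
  -- the key functional identity on B × B
  have key : ∀ w ∈ B, ∀ z ∈ B,
      (φ z - φ w) * (φ z - φ w) = (z - w) * (z - w) * deriv φ z * deriv φ w := by
    intro w hw z hz
    set G : ℂ → ℂ := fun x => (dslope φ w x)^2 / (deriv φ x * deriv φ w) with hGdef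
    have hdG : DifferentiableOn ℂ G B := by
      apply DifferentiableOn.div
      · exact ((Complex.differentiableOn_dslope (isOpen_ball.mem_nhds hw)).mpr
          (hφd.mono hBD)).pow 2
      · exact ((hA1.mono hBD).differentiableOn).mul_const _
      · exact fun x hx => mul_ne_zero (hne x hx) (hne w hw)
    have habs : ∀ x ∈ B, ‖G x‖ = 1 := by
      intro x hx
      rcases eq_or_ne x w with rfl | hxw
      · have : G x = 1 := by
          rw [hGdef]
          simp only [dslope_same, sq]
          exact div_self (mul_ne_zero (hne x hx) (hne x hx))
        simp [this]
      · have hxD := hBD hx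
        have hwD := hBD hw
        have hfne : φ x - φ w ≠ 0 :=
          sub_ne_zero.mpr (fun h => hxw (hφi hxD hwD h))
        have hxwne : x - w ≠ 0 := sub_ne_zero.mpr hxw
        have hhh := hH x hxD w hwD hxw
        set a := ‖φ x - φ w‖ with ha'
        set b := ‖x - w‖ with hb'
        set c := ‖deriv φ x‖ with hc'
        set d := ‖deriv φ w‖ with hd'
        have hap : 0 < a := norm_pos_iff.mpr hfne
        have hbp : 0 < b := norm_pos_iff.mpr hxwne
        have hcp : 0 < c := norm_pos_iff.mpr (hne x hx)
        have hdp : 0 < d := norm_pos_iff.mpr (hne w hw)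
        have hlog : Real.log (a^2) = Real.log (b^2 * (c * d)) := by
          rw [Real.log_pow, Real.log_mul (pow_ne_zero 2 hbp.ne') (mul_ne_zero hcp.ne' hdp.ne'),
            Real.log_mul hcp.ne' hdp.ne', Real.log_pow]
          push_cast
          linarith
        have h2 : a^2 = b^2 * (c * d) := by
          have := congrArg Real.exp hlog
          rwa [Real.exp_log (by positivity), Real.exp_log (by positivity)] at this
        have : G x = ((φ x - φ w) / (x - w))^2 / (deriv φ x * deriv φ w) := by
          rw [hGdef]; simp only
          rw [dslope_of_ne _ hxw, slope_def_field]
        rw [this, norm_div, norm_pow, norm_div, norm_mul, ← ha', ← hb', ← hc', ← hd', div_pow]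
        rw [div_eq_one_iff_eq (by positivity)]
        field_simp
        linarith [h2]
    have hmax : IsMaxOn (norm ∘ G) B w := by
      apply isMaxOn_iff.mpr
      intro x hx
      simp only [Function.comp_apply, habs x hx, habs w hw, le_refl]
    have heq := Complex.eqOn_of_isPreconnected_of_isMaxOn_norm
      (convex_ball z₀ r).isPreconnected isOpen_ball hdG hw hmax
    have hGw : G w = 1 := by
      rw [hGdef]
      simp only [dslope_same, sq]
      exact div_self (mul_ne_zero (hne w hw) (hne w hw))
    have hGz : G z = 1 := by
      have := heq hz
      simpa [Function.const, hGw] using this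
    rcases eq_or_ne z w with rfl | hzw
    · ring
    · have hd0 : deriv φ z * deriv φ w ≠ 0 := mul_ne_zero (hne z hz) (hne w hw)
      have hGz' : (dslope φ w z)^2 = deriv φ z * deriv φ w := by
        have h := hGz
        rw [hGdef] at h
        simp only at h
        rw [div_eq_one_iff_eq hd0] at h
        linear_combination h
      rw [dslope_of_ne _ hzw, slope_def_field] at hGz'
      have hzwne : z - w ≠ 0 := sub_ne_zero.mpr hzw
      have := hGz'
      field_simp at this
      linear_combination this
  -- differentiability facts as HasDerivAt
  have hD0 : ∀ x ∈ B, HasDerivAt φ (deriv φ x) x :=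
    fun x hx => (hA x (hBD hx)).differentiableAt.hasDerivAt
  have hD1 : ∀ x ∈ B, HasDerivAt (deriv φ) (deriv (deriv φ) x) x :=
    fun x hx => (hA1 x (hBD hx)).differentiableAt.hasDerivAt
  have hD2 : ∀ x ∈ B, HasDerivAt (deriv (deriv φ)) (deriv (deriv (deriv φ)) x) x :=
    fun x hx => (hA2 x (hBD hx)).differentiableAt.hasDerivAt
  have hD3 : ∀ x ∈ B, HasDerivAt (deriv (deriv (deriv φ)))
      (deriv (deriv (deriv (deriv φ))) x) x :=
    fun x hx => (hA3 x (hBD hx)).differentiableAt.hasDerivAt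
  have hD4 : ∀ x ∈ B, HasDerivAt (deriv (deriv (deriv (deriv φ))))
      (deriv (deriv (deriv (deriv (deriv φ)))) x) x :=
    fun x hx => (hA4 x (hBD hx)).differentiableAt.hasDerivAt
  set c0 := φ z₀ with hc0
  set kd := deriv φ z₀ with hkd
  -- the chain of derivative identities
  set F0 : ℂ → ℂ := fun z => (φ z - c0) * (φ z - c0) - (z - z₀) * (z - z₀) * deriv φ z * kd
    with hF0def
  set F1 : ℂ → ℂ := fun z => 2 * (φ z - c0) * deriv φ z
    - (2 * (z - z₀) * deriv φ z + (z - z₀) * (z - z₀) * deriv (deriv φ) z) * kd with hF1def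
  set F2 : ℂ → ℂ := fun z => 2 * (deriv φ z) * (deriv φ z) + 2 * (φ z - c0) * deriv (deriv φ) z
    - (2 * deriv φ z + 4 * (z - z₀) * deriv (deriv φ) z
        + (z - z₀) * (z - z₀) * deriv (deriv (deriv φ)) z) * kd with hF2def
  set F3 : ℂ → ℂ := fun z => 6 * deriv φ z * deriv (deriv φ) z
    + 2 * (φ z - c0) * deriv (deriv (deriv φ)) z
    - (6 * deriv (deriv φ) z + 6 * (z - z₀) * deriv (deriv (deriv φ)) z
        + (z - z₀) * (z - z₀) * deriv (deriv (deriv (deriv φ))) z) * kd with hF3def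
  have hF0 : ∀ z ∈ B, F0 z = 0 := by
    intro z hz
    have := key z₀ hz₀B z hz
    rw [hF0def]
    simp only [hc0, hkd]
    linear_combination this
  have hF0deriv : ∀ z ∈ B, HasDerivAt F0 (F1 z) z := by
    intro z hz
    have ha := ((hD0 z hz).sub_const c0).mul ((hD0 z hz).sub_const c0)
    have hb := (((((hasDerivAt_id z).sub_const z₀).mul
      ((hasDerivAt_id z).sub_const z₀)).mul (hD1 z hz)).mul_const kd)
    have h := ha.sub hb
    convert h using 1
    · rfl
    · rfl
    · rfl
    rw [hF1def]
    simp only [id_eq, Pi.mul_apply]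
    ring
  have hF1z : ∀ z ∈ B, F1 z = 0 := deriv_zero_of_eqOn_zero isOpen_ball hF0 hF0deriv
  have hF1deriv : ∀ z ∈ B, HasDerivAt F1 (F2 z) z := by
    intro z hz
    have ha := (((hD0 z hz).sub_const c0).const_mul 2).mul (hD1 z hz)
    have hb1 := ((((hasDerivAt_id z).sub_const z₀).const_mul 2).mul (hD1 z hz))
    have hb2 := ((((hasDerivAt_id z).sub_const z₀).mul
      ((hasDerivAt_id z).sub_const z₀)).mul (hD2 z hz))
    have hb := (hb1.add hb2).mul_const kd
    have h := ha.sub hb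
    convert h using 1
    · rfl
    · rfl
    · rfl
    rw [hF2def]
    simp only [id_eq, hc0, Pi.mul_apply]
    ring
  have hF2z : ∀ z ∈ B, F2 z = 0 := deriv_zero_of_eqOn_zero isOpen_ball hF1z hF1deriv
  have hF2deriv : ∀ z ∈ B, HasDerivAt F2 (F3 z) z := by
    intro z hz
    have ha1 := ((hD1 z hz).const_mul 2).mul (hD1 z hz)
    have ha2 := (((hD0 z hz).sub_const c0).const_mul 2).mul (hD2 z hz)
    have hb1 := (hD1 z hz).const_mul 2
    have hb2 := ((((hasDerivAt_id z).sub_const z₀).const_mul 4).mul (hD2 z hz))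
    have hb3 := ((((hasDerivAt_id z).sub_const z₀).mul
      ((hasDerivAt_id z).sub_const z₀)).mul (hD3 z hz))
    have hb := ((hb1.add hb2).add hb3).mul_const kd
    have h := (ha1.add ha2).sub hb
    convert h using 1
    · rfl
    · rfl
    · rfl
    rw [hF3def]
    simp only [id_eq, hc0, Pi.mul_apply]
    ring
  have hF3z : ∀ z ∈ B, F3 z = 0 := deriv_zero_of_eqOn_zero isOpen_ball hF2z hF2deriv
  -- fourth derivative at z₀
  have hF3deriv : HasDerivAt F3
      (6 * deriv (deriv φ) z₀ * deriv (deriv φ) z₀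
        + 8 * deriv φ z₀ * deriv (deriv (deriv φ)) z₀
        - 12 * deriv (deriv (deriv φ)) z₀ * kd) z₀ := by
    have ha1 := ((hD1 z₀ hz₀B).const_mul 6).mul (hD2 z₀ hz₀B)
    have ha2 := (((hD0 z₀ hz₀B).sub_const c0).const_mul 2).mul (hD3 z₀ hz₀B)
    have hb1 := (hD2 z₀ hz₀B).const_mul 6
    have hb2 := ((((hasDerivAt_id z₀).sub_const z₀).const_mul 6).mul (hD3 z₀ hz₀B))
    have hb3 := ((((hasDerivAt_id z₀).sub_const z₀).mul
      ((hasDerivAt_id z₀).sub_const z₀)).mul (hD4 z₀ hz₀B))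
    have hb := ((hb1.add hb2).add hb3).mul_const kd
    have h := (ha1.add ha2).sub hb
    convert h using 1
    · rfl
    · rfl
    · rfl
    simp only [id_eq, hc0, hkd, Pi.mul_apply]
    ring
  have hF4 : 6 * deriv (deriv φ) z₀ * deriv (deriv φ) z₀
      + 8 * deriv φ z₀ * deriv (deriv (deriv φ)) z₀
      - 12 * deriv (deriv (deriv φ)) z₀ * kd = 0 := by
    have hev : F3 =ᶠ[nhds z₀] fun _ => 0 := by
      filter_upwards [isOpen_ball.mem_nhds hz₀B] with x hx using hF3z x hx
    exact hF3deriv.unique ((hasDerivAt_const z₀ (0:ℂ)).congr_of_eventuallyEq hev)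
  -- final algebra
  rw [hkd] at hF4
  field_simp
  simp only [hkd]
  linear_combination (-(1:ℂ)/2) * hF4
end

section
/- The holomorphic extension of F_φ(z,w) = φ'(z)φ'(w)(z−w)²/(φ(z)−φ(w))² to the diagonal satisfies F_φ(z,w) = 1 + (1/6)S(φ)(z)(w−z)² + O((w−z)³), where S(φ) = φ'''/φ' − (3/2)(φ''/φ')² is the Schwarzian derivative. -/
open Metric Set Filter Topology Asymptotics


lemma taylor_isBigO (f : ℂ → ℂ) (z₀ : ℂ) (hf : AnalyticAt ℂ f z₀) (n : ℕ) :
    (fun w => f w - ∑ k ∈ Finset.range n,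
        ((k.factorial : ℂ))⁻¹ * iteratedDeriv k f z₀ * (w - z₀) ^ k)
      =O[𝓝 z₀] fun w => (w - z₀) ^ n := by
  obtain ⟨p, hp⟩ := hf
  obtain ⟨r0, hb⟩ := hp
  have hcoeff : ∀ k, p.coeff k = ((k.factorial : ℂ))⁻¹ * iteratedDeriv k f z₀ := by
    intro k
    have h1 := hb.factorial_smul (1 : ℂ) k
    rw [FormalMultilinearSeries.apply_eq_pow_smul_coeff, one_pow, one_smul, nsmul_eq_mul] at h1
    have h2 : iteratedFDeriv ℂ k f z₀ (fun _ => (1:ℂ)) = iteratedDeriv k f z₀ := rfl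
    rw [h2] at h1
    field_simp [Nat.factorial_ne_zero] at h1 ⊢
    linear_combination h1
  have hps : ∀ y : ℂ, p.partialSum n y =
      ∑ k ∈ Finset.range n, ((k.factorial : ℂ))⁻¹ * iteratedDeriv k f z₀ * y ^ k := by
    intro y
    unfold FormalMultilinearSeries.partialSum
    refine Finset.sum_congr rfl fun k _ => ?_
    rw [FormalMultilinearSeries.apply_eq_pow_smul_coeff, hcoeff k, smul_eq_mul]
    ring
  have h1 := hb.hasFPowerSeriesAt.isBigO_sub_partialSum_pow n
  have htend : Tendsto (fun w : ℂ => w - z₀) (𝓝 z₀) (𝓝 0) :=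
    tendsto_sub_nhds_zero_iff.mpr tendsto_id
  have h2 := h1.comp_tendsto htend
  have h3 : (fun w : ℂ => f w - ∑ k ∈ Finset.range n,
        ((k.factorial : ℂ))⁻¹ * iteratedDeriv k f z₀ * (w - z₀) ^ k)
      =O[𝓝 z₀] fun w : ℂ => ‖(w - z₀) ^ n‖ := by
    refine (h2.congr ?_ ?_)
    · intro w
      simp [Function.comp, hps]
    · intro w
      simp [norm_pow]
  exact h3.of_norm_right

lemma pow_isBigO (z₀ : ℂ) {j k : ℕ} (h : k ≤ j) :
    (fun w : ℂ => (w - z₀) ^ j) =O[𝓝 z₀] fun w => (w - z₀) ^ k := by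
  have h1 : (fun w : ℂ => (w - z₀) ^ (j - k)) =O[𝓝 z₀] (fun _ => (1:ℂ)) :=
    (((continuous_id.sub continuous_const).pow (j - k)).tendsto z₀).isBigO_one ℂ
  have h2 := h1.mul (isBigO_refl (fun w : ℂ => (w - z₀) ^ k) (𝓝 z₀))
  refine h2.congr (fun w => ?_) (fun w => one_mul _)
  rw [← pow_add]
  congr 1
  omega


lemma aux_deriv_ne_zero {c : ℂ} {r : ℝ} {φ : ℂ → ℂ}
    (hφd : DifferentiableOn ℂ φ (ball c r)) (hφi : Set.InjOn φ (ball c r))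
    {z₀ : ℂ} (hz₀ : z₀ ∈ ball c r) : deriv φ z₀ ≠ 0 := by
  intro h0
  have hop : IsOpen (ball c r) := isOpen_ball
  have hφa : AnalyticOnNhd ℂ φ (ball c r) := hφd.analyticOnNhd hop
  have hball : ball c r ∈ 𝓝 z₀ := hop.mem_nhds hz₀
  have hballe : ∀ᶠ w in 𝓝 z₀, w ∈ ball c r := hball
  have hfa : AnalyticAt ℂ (fun w => φ w - φ z₀) z₀ := (hφa z₀ hz₀).sub analyticAt_const
  rcases eq_or_ne (analyticOrderAt (fun w => φ w - φ z₀) z₀) ⊤ with htop | hne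
  · have hev : ∀ᶠ w in 𝓝 z₀, φ w - φ z₀ = 0 := analyticOrderAt_eq_top.mp htop
    have h2 : ∀ᶠ w in 𝓝[≠] z₀, (φ w - φ z₀ = 0 ∧ w ∈ ball c r) :=
      eventually_nhdsWithin_of_eventually_nhds (hev.and hballe)
    obtain ⟨w, ⟨hw0, hwb⟩, hwne⟩ := (h2.and eventually_mem_nhdsWithin).exists
    exact hwne (hφi hwb hz₀ (sub_eq_zero.mp hw0))
  obtain ⟨n, hn⟩ : ∃ n : ℕ, analyticOrderAt (fun w => φ w - φ z₀) z₀ = n := ⟨(analyticOrderAt (fun w => φ w - φ z₀) z₀).toNat, (ENat.coe_toNat hne).symm⟩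
  obtain ⟨g, hg, hgz, hfg⟩ := (hfa.analyticOrderAt_eq_natCast (n := n)).mp hn
  have hfg' : (fun w => φ w - φ z₀) =ᶠ[𝓝 z₀] fun w => (w - z₀) ^ n • g w := hfg
  have hn0 : n ≠ 0 := by
    rintro rfl
    have h1 := hfg'.self_of_nhds
    simp only [sub_self, pow_zero, one_smul] at h1
    exact hgz h1.symm
  have hn1 : n ≠ 1 := by
    rintro rfl
    have hd1 := hfg'.deriv_eq
    have hD : HasDerivAt (fun w : ℂ => (w - z₀) ^ 1 • g w) (g z₀) z₀ := by
      have h1 : HasDerivAt (fun w : ℂ => w - z₀) 1 z₀ := (hasDerivAt_id z₀).sub_const z₀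
      have h2 : HasDerivAt g (deriv g z₀) z₀ := hg.differentiableAt.hasDerivAt
      have := h1.mul h2
      simpa [Pi.mul_def] using this
    have hd2 : deriv (fun w => φ w - φ z₀) z₀ = g z₀ := hd1.trans hD.deriv
    rw [deriv_sub_const, h0] at hd2
    exact hgz hd2.symm
  have hn2 : 2 ≤ n := by omega
  set b := g z₀ with hbdef
  set α := b ^ ((n : ℂ)⁻¹) with hαdef
  have hαn : α ^ n = b := Complex.cpow_nat_inv_pow b hn0
  have hαne : α ≠ 0 := by
    intro hα
    apply hgz
    rw [← hαn, hα, zero_pow hn0]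
  set h : ℂ → ℂ := fun w => α * Complex.exp ((n : ℂ)⁻¹ * Complex.log (g w / b)) with hhdef
  have hhne : ∀ w, h w ≠ 0 := fun w => mul_ne_zero hαne (Complex.exp_ne_zero _)
  set ψ : ℂ → ℂ := fun w => (w - z₀) * h w with hψdef
  have hga : AnalyticAt ℂ (fun w => g w / b) z₀ := hg.div analyticAt_const hgz
  have hha : AnalyticAt ℂ h z₀ := by
    apply analyticAt_const.mul
    apply AnalyticAt.cexp
    apply analyticAt_const.mul
    apply hga.clog
    simp [← hbdef, div_self hgz]
  have hψa : AnalyticAt ℂ ψ z₀ := (analyticAt_id.sub analyticAt_const).mul hha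
  have hgne : ∀ᶠ w in 𝓝 z₀, g w ≠ 0 := hg.continuousAt.eventually_ne hgz
  have hfψ : ∀ᶠ w in 𝓝 z₀, φ w - φ z₀ = ψ w ^ n := by
    filter_upwards [hfg, hgne] with w hw hwg
    have hexp : h w ^ n = g w := by
      rw [hhdef]
      simp only
      rw [mul_pow, ← Complex.exp_nat_mul, ← mul_assoc,
        mul_inv_cancel₀ (Nat.cast_ne_zero.mpr hn0), one_mul,
        Complex.exp_log (div_ne_zero hwg hgz), hαn]
      field_simp
    rw [hw, hψdef]
    simp only
    rw [mul_pow, hexp, smul_eq_mul]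
  have hψ0 : ψ z₀ = 0 := by simp [hψdef]
  rcases hψa.eventually_constant_or_nhds_le_map_nhds with hconst | hmap
  · have h2 : ∀ᶠ w in 𝓝[≠] z₀, ψ w = 0 :=
      eventually_nhdsWithin_of_eventually_nhds (by simpa [hψ0] using hconst)
    obtain ⟨w, hw1, hw2⟩ := (h2.and eventually_mem_nhdsWithin).exists
    have hwne : w ≠ z₀ := hw2
    rcases mul_eq_zero.mp hw1 with h | h
    · exact hwne (sub_eq_zero.mp h)
    · exact hhne w h
  · rw [hψ0] at hmap
    have hE : {w | (φ w - φ z₀ = ψ w ^ n ∧ w ∈ ball c r)} ∈ 𝓝 z₀ := hfψ.and hballe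
    have him : ψ '' {w | (φ w - φ z₀ = ψ w ^ n ∧ w ∈ ball c r)} ∈ 𝓝 (0:ℂ) :=
      hmap (image_mem_map hE)
    obtain ⟨δ, hδpos, hδ⟩ := Metric.mem_nhds_iff.mp him
    set ζ := Complex.exp (2 * Real.pi * Complex.I / n) with hζdef
    have hζprim : IsPrimitiveRoot ζ n := Complex.isPrimitiveRoot_exp n hn0
    have hζn : ζ ^ n = 1 := hζprim.pow_eq_one
    have hζ1 : ζ ≠ 1 := hζprim.ne_one (by omega)
    have hζnorm : ‖ζ‖ = 1 := by
      have h1 : ‖ζ‖ ^ n = 1 := by rw [← norm_pow, hζn, norm_one]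
      rcases lt_trichotomy ‖ζ‖ 1 with h | h | h
      · exact absurd h1 (by nlinarith [pow_lt_one₀ (norm_nonneg ζ) h hn0])
      · exact h
      · exact absurd h1 (by nlinarith [one_lt_pow₀ h hn0])
    set v : ℂ := ((δ/2 : ℝ) : ℂ) with hvdef
    have hv0 : v ≠ 0 := by
      simp [hvdef]
      positivity
    have hvnorm : ‖v‖ = δ / 2 := by
      rw [hvdef, Complex.norm_real, Real.norm_of_nonneg (by positivity)]
    have hvmem : v ∈ Metric.ball (0:ℂ) δ := by
      rw [mem_ball, dist_zero_right, hvnorm]; linarith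
    have hζv : ζ * v ∈ Metric.ball (0:ℂ) δ := by
      simp only [mem_ball, dist_zero_right, norm_mul, hζnorm, one_mul]
      rw [hvnorm]; linarith
    obtain ⟨w₁, hw₁E, hw₁⟩ := hδ hvmem
    obtain ⟨w₂, hw₂E, hw₂⟩ := hδ hζv
    have hfeq : φ w₁ - φ z₀ = φ w₂ - φ z₀ := by
      rw [hw₁E.1, hw₂E.1, hw₁, hw₂, mul_pow, hζn, one_mul]
    have hww : w₁ = w₂ := hφi hw₁E.2 hw₂E.2 (sub_left_inj.mp hfeq)
    have hvv : v = ζ * v := by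
      calc v = ψ w₁ := hw₁.symm
        _ = ψ w₂ := by rw [hww]
        _ = ζ * v := hw₂
    exact hζ1 (mul_right_cancel₀ hv0 (by rw [← hvv, one_mul])).symm

/-- The holomorphic extension F of
F_φ(z,w) = φ'(z)φ'(w)(z−w)²/(φ(z)−φ(w))² satisfies, for each z in the disk,
F(z,w) = 1 + (1/6)S(φ)(z)(w−z)² + O((w−z)³), with S(φ) the Schwarzian derivative. -/

theorem F_taylor_expansion_schwarzian (c : ℂ) (r : ℝ) (hr : 0 < r) (φ : ℂ → ℂ)
    (hφd : DifferentiableOn ℂ φ (ball c r)) (hφi : Set.InjOn φ (ball c r))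
    (F : ℂ × ℂ → ℂ)
    (hFd : DifferentiableOn ℂ F (ball c r ×ˢ ball c r))
    (hF : ∀ z ∈ ball c r, ∀ w ∈ ball c r, z ≠ w →
      F (z, w) = deriv φ z * deriv φ w * (z - w) ^ 2 / (φ z - φ w) ^ 2) :
    ∀ z ∈ ball c r,
      (fun w : ℂ => F (z, w) - 1 -
          (1 / 6) * (deriv (deriv (deriv φ)) z / deriv φ z
            - (3 / 2) * (deriv (deriv φ) z / deriv φ z) ^ 2) * (w - z) ^ 2)
        =O[𝓝 z] (fun w : ℂ => (w - z) ^ 3) := by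
  intro z₀ hz₀
  have hop : IsOpen (ball c r) := isOpen_ball
  have hφa : AnalyticOnNhd ℂ φ (ball c r) := hφd.analyticOnNhd hop
  have hball : ball c r ∈ 𝓝 z₀ := hop.mem_nhds hz₀
  have hballe : ∀ᶠ w in 𝓝 z₀, w ∈ ball c r := hball
  set A1 := deriv φ z₀ with hA1
  set A2 := deriv (deriv φ) z₀ with hA2
  set A3 := deriv (deriv (deriv φ)) z₀ with hA3
  have hA1ne : A1 ≠ 0 := aux_deriv_ne_zero hφd hφi hz₀
  obtain ⟨S, hSdef⟩ : ∃ S : ℂ, S = 1 / 6 * (A3 / A1 - 3 / 2 * (A2 / A1) ^ 2) := ⟨_, rfl⟩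
  rw [← hSdef]
  have hcS : S * A1 ^ 2 = A1 * A3 / 6 - A2 ^ 2 / 4 := by
    have key2 : ∀ x y z : ℂ, x ≠ 0 →
        1 / 6 * (z / x - 3 / 2 * (y / x) ^ 2) * x ^ 2 = x * z / 6 - y ^ 2 / 4 := by
      intro x y z hx
      linear_combination (1/6*z*x - 1/4*y^2*(x*x⁻¹+1)) * mul_inv_cancel₀ hx
    rw [hSdef]; exact key2 A1 A2 A3 hA1ne
  have hφz : AnalyticAt ℂ φ z₀ := hφa z₀ hz₀
  have hdφz : AnalyticAt ℂ (deriv φ) z₀ := hφa.deriv z₀ hz₀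
  have hid2 : iteratedDeriv 2 φ = deriv (deriv φ) := by
    rw [show (2:ℕ) = 1+1 from rfl, iteratedDeriv_succ, iteratedDeriv_one]
  have hid3 : iteratedDeriv 3 φ = deriv (deriv (deriv φ)) := by
    rw [show (3:ℕ) = 2+1 from rfl, iteratedDeriv_succ, hid2]
  set P : ℂ → ℂ := fun w => φ z₀ + A1*(w - z₀) + A2/2*(w - z₀)^2 + A3/6*(w - z₀)^3
    with hPdef
  set Q : ℂ → ℂ := fun w => A1 + A2*(w - z₀) + A3/2*(w - z₀)^2 with hQdef
  set M : ℂ → ℂ :=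
    fun w => A1 * deriv φ w * (w - z₀)^2 - (1 + S*(w - z₀)^2) * (φ w - φ z₀)^2 with hMdef
  have hRP : (fun w => φ w - P w) =O[𝓝 z₀] fun w => (w - z₀) ^ 4 := by
    refine (taylor_isBigO φ z₀ hφz 4).congr (fun w => ?_) (fun w => rfl)
    rw [Finset.sum_range_succ, Finset.sum_range_succ, Finset.sum_range_succ,
      Finset.sum_range_one]
    simp only [hPdef, iteratedDeriv_zero, iteratedDeriv_one, hid2, hid3, ← hA1, ← hA2, ← hA3,
      Nat.factorial]
    push_cast
    ring
  have hRQ : (fun w => deriv φ w - Q w) =O[𝓝 z₀] fun w => (w - z₀) ^ 3 := by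
    refine (taylor_isBigO (deriv φ) z₀ hdφz 3).congr (fun w => ?_) (fun w => rfl)
    rw [Finset.sum_range_succ, Finset.sum_range_succ, Finset.sum_range_one]
    have e1 : iteratedDeriv 1 (deriv φ) = deriv (deriv φ) := iteratedDeriv_one
    have e2 : iteratedDeriv 2 (deriv φ) = deriv (deriv (deriv φ)) := by
      rw [show (2:ℕ) = 1+1 from rfl, iteratedDeriv_succ, e1]
    simp only [hQdef, iteratedDeriv_zero, e1, e2, ← hA1, ← hA2, ← hA3, Nat.factorial]
    push_cast
    ring
  set ρ : ℂ → ℂ := fun w => -(A2*A3/6) - S*A1*A2 - (A3^2/36 + S*(A1*A3/3 + A2^2/4))*(w-z₀)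
      - S*(A2*A3/6)*(w-z₀)^2 - S*(A3^2/36)*(w-z₀)^3 with hρdef
  have hρO : ρ =O[𝓝 z₀] (fun _ => (1:ℂ)) := by
    have hc : Continuous ρ := by rw [hρdef]; fun_prop
    exact (hc.tendsto z₀).isBigO_one ℂ
  have hBeq : ∀ w, A1 * Q w * (w-z₀)^2 - (1 + S*(w-z₀)^2) * (P w - φ z₀)^2
      = (w-z₀)^5 * ρ w := by
    intro w
    simp only [hPdef, hQdef, hρdef]
    linear_combination (-(w - z₀)^4) * hcS
  have hB : (fun w => A1 * Q w * (w-z₀)^2 - (1 + S*(w-z₀)^2) * (P w - φ z₀)^2)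
      =O[𝓝 z₀] fun w => (w - z₀)^5 :=
    (((isBigO_refl (fun w : ℂ => (w - z₀)^5) (𝓝 z₀)).mul hρO).congr
      (fun w => (hBeq w).symm) (fun w => mul_one _))
  have hT2 : (fun w => A1 * (deriv φ w - Q w) * (w - z₀)^2) =O[𝓝 z₀]
      fun w => (w - z₀)^5 := by
    refine ((hRQ.const_mul_left A1).mul
      (isBigO_refl (fun w : ℂ => (w-z₀)^2) (𝓝 z₀))).congr (fun w => rfl) (fun w => ?_)
    ring
  have hφsub : (fun w => φ w - φ z₀) =O[𝓝 z₀] fun w => w - z₀ :=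
    (hφz.differentiableAt.hasDerivAt.hasFDerivAt.isBigO_sub)
  have hPsub : (fun w => P w - φ z₀) =O[𝓝 z₀] fun w => w - z₀ := by
    have hc : Continuous (fun w : ℂ => A1 + A2/2*(w-z₀) + A3/6*(w-z₀)^2) := by fun_prop
    refine (((hc.tendsto z₀).isBigO_one ℂ).mul
      (isBigO_refl (fun w : ℂ => w - z₀) (𝓝 z₀))).congr (fun w => ?_) (fun w => one_mul _)
    simp only [hPdef]
    ring
  have hone : (fun w : ℂ => 1 + S*(w-z₀)^2) =O[𝓝 z₀] (fun _ => (1:ℂ)) := by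
    have hc : Continuous (fun w : ℂ => 1 + S*(w-z₀)^2) := by fun_prop
    exact (hc.tendsto z₀).isBigO_one ℂ
  have hT3 : (fun w => (1 + S*(w-z₀)^2) * ((φ w - P w) * (φ w + P w - 2*(φ z₀))))
      =O[𝓝 z₀] fun w => (w - z₀)^5 := by
    have hsum : (fun w => φ w + P w - 2*(φ z₀)) =O[𝓝 z₀] fun w => w - z₀ :=
      (hφsub.add hPsub).congr_left (fun w => by ring)
    have h4 : (fun w => φ w - P w) =O[𝓝 z₀] fun w => (w - z₀)^4 := hRP
    refine (hone.mul (h4.mul hsum)).congr (fun w => rfl) (fun w => ?_)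
    ring
  have hM : M =O[𝓝 z₀] fun w => (w - z₀)^5 := by
    refine ((hB.add hT2).sub hT3).congr (fun w => ?_) (fun w => rfl)
    simp only [hMdef, hPdef, hQdef]
    ring
  -- continuity of F and value at the diagonal
  have hFc : ContinuousAt (fun w => F (z₀, w)) z₀ := by
    have h1 : ContinuousAt F (z₀, z₀) :=
      hFd.continuousOn.continuousAt ((hop.prod hop).mem_nhds (mk_mem_prod hz₀ hz₀))
    exact h1.comp (continuous_const.prodMk continuous_id).continuousAt
  have hsl : Tendsto (slope φ z₀) (𝓝[≠] z₀) (𝓝 A1) :=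
    hasDerivAt_iff_tendsto_slope.mp hφz.differentiableAt.hasDerivAt
  have hFeq : (fun w => F (z₀, w)) =ᶠ[𝓝[≠] z₀]
      fun w => A1 * deriv φ w / (slope φ z₀ w)^2 := by
    filter_upwards [eventually_nhdsWithin_of_eventually_nhds hballe,
      eventually_mem_nhdsWithin] with w hwb hwne
    have hwne' : w ≠ z₀ := hwne
    have hune : (w - z₀) ≠ 0 := sub_ne_zero.mpr hwne'
    rw [hF z₀ hz₀ w hwb (Ne.symm hwne'), slope_def_field, div_pow, div_div_eq_mul_div]
    have h1 : (z₀ - w)^2 = (w - z₀)^2 := by ring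
    have h2 : (φ z₀ - φ w)^2 = (φ w - φ z₀)^2 := by ring
    rw [h1, h2, ← hA1]
  have hlim : Tendsto (fun w => F (z₀, w)) (𝓝[≠] z₀) (𝓝 1) := by
    have h1 : Tendsto (fun w => A1 * deriv φ w / (slope φ z₀ w)^2) (𝓝[≠] z₀)
        (𝓝 (A1 * A1 / A1^2)) := by
      refine Tendsto.div ?_ (hsl.pow 2) (pow_ne_zero 2 hA1ne)
      exact tendsto_const_nhds.mul ((hdφz.continuousAt.tendsto).mono_left nhdsWithin_le_nhds)
    have h2 : A1 * A1 / A1^2 = 1 := by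
      field_simp [pow_two]
    rw [h2] at h1
    exact h1.congr' hFeq.symm
  have hF1 : F (z₀, z₀) = 1 :=
    tendsto_nhds_unique (hFc.tendsto.mono_left nhdsWithin_le_nhds) hlim
  have hlow : ∀ᶠ w in 𝓝[≠] z₀, ‖A1‖/2 * ‖w - z₀‖ ≤ ‖φ w - φ z₀‖ := by
    have h1 : Tendsto (fun w => ‖slope φ z₀ w‖) (𝓝[≠] z₀) (𝓝 ‖A1‖) := hsl.norm
    have h2 : ∀ᶠ w in 𝓝[≠] z₀, ‖A1‖/2 < ‖slope φ z₀ w‖ :=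
      h1.eventually_const_lt (half_lt_self (norm_pos_iff.mpr hA1ne))
    filter_upwards [h2, eventually_mem_nhdsWithin] with w hw hwne
    have hwne' : w ≠ z₀ := hwne
    have hune : w - z₀ ≠ 0 := sub_ne_zero.mpr hwne'
    have heq : φ w - φ z₀ = slope φ z₀ w * (w - z₀) := by
      rw [slope_def_field]; field_simp
    rw [heq, norm_mul]
    exact mul_le_mul_of_nonneg_right hw.le (norm_nonneg (w - z₀))
  obtain ⟨C, hC⟩ := hM.bound
  have hlow' : ∀ᶠ w in 𝓝 z₀, w ≠ z₀ → ‖A1‖/2 * ‖w - z₀‖ ≤ ‖φ w - φ z₀‖ := by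
    rw [eventually_nhdsWithin_iff] at hlow
    filter_upwards [hlow] with w hw hwne
    exact hw hwne
  rw [isBigO_iff]
  refine ⟨C * 4 / ‖A1‖^2, ?_⟩
  filter_upwards [hC, hballe, hlow'] with w hw1 hw2 hw3
  by_cases hwz : w = z₀
  · subst hwz
    simp [hF1]
  · have hune : w - z₀ ≠ 0 := sub_ne_zero.mpr hwz
    have hφne : φ w - φ z₀ ≠ 0 := sub_ne_zero.mpr (fun h => hwz (hφi hw2 hz₀ h))
    specialize hw3 hwz
    have hGeq : F (z₀, w) - 1 - S * (w - z₀)^2 = M w / (φ w - φ z₀)^2 := by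
      rw [hF z₀ hz₀ w hw2 (fun h => hwz h.symm), hMdef]
      simp only
      have h1 : (z₀ - w)^2 = (w - z₀)^2 := by ring
      have h2 : (φ z₀ - φ w)^2 = (φ w - φ z₀)^2 := by ring
      rw [h1, h2]
      field_simp
      ring
    rw [hGeq, norm_div, norm_pow]
    have hdpos : 0 < ‖φ w - φ z₀‖ := norm_pos_iff.mpr hφne
    have hA1pos : 0 < ‖A1‖ := norm_pos_iff.mpr hA1ne
    have hupos : 0 < ‖w - z₀‖ := norm_pos_iff.mpr hune
    have hMw : ‖M w‖ ≤ C * ‖w - z₀‖^5 := by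
      calc ‖M w‖ ≤ C * ‖(w - z₀)^5‖ := hw1
        _ = C * ‖w - z₀‖^5 := by rw [norm_pow]
    have hCnn : 0 ≤ C * ‖w - z₀‖^5 := le_trans (norm_nonneg _) hMw
    have step1 : ‖M w‖ / ‖φ w - φ z₀‖^2 ≤ (C * ‖w - z₀‖^5) / ((‖A1‖/2 * ‖w - z₀‖)^2) := by
      refine div_le_div₀ hCnn hMw (by positivity) ?_
      exact pow_le_pow_left₀ (by positivity) hw3 2
    have key : ∀ Cr a b : ℝ, a ≠ 0 → b ≠ 0 →
        Cr * a ^ 5 / (b / 2 * a) ^ 2 = Cr * 4 / b ^ 2 * a ^ 3 := by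
      intro Cr a b ha hb; field_simp; ring
    rw [norm_pow]
    exact step1.trans (le_of_eq (key C _ _ hupos.ne' hA1pos.ne'))
end
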